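/- Let T be a tree and y a node of T such that c_T(y) is admissible and all the subtrees S_{y_1}, …, S_{y_ℓ} occurring in the characteristic sequence of y are balanced. Then, for every node x of T such that y ⇝_T x (x is on the right compared to y), the word c_T(x) is admissible. -/

import Mathlib

/-!
If `y ⇝ x`, let `z` be their lowest common ancestor. Either `x = z`, and `c_T(x)` is a
suffix of `c_T(y)`; or `x` lies in the right subtree `S = S_{y_i}` of `z = y_i`, and
`c_T(x) = c_S(x) · w` where `ht(S) · w` is a suffix of `c_T(y)`. Suffixes of admissible
words are admissible, and since every node of the balanced tree `S` has imbalance at most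
one, the letters of `c_S(x)` merge pairwise, bottom up, into the single letter `ht(S)`.
-/


/-- Complete rooted planar binary trees. -/
inductive BTree where
  | leaf : BTree
  | node : BTree → BTree → BTree
  deriving DecidableEq

namespace BTree

/-- The height of a tree. -/
def ht : BTree → ℕ
  | leaf => 0
  | node l r => 1 + max l.ht r.ht

/-- The imbalance value of the root of a tree (`γ`). -/
def imb : BTree → ℤ
  | leaf => 0
  | node l r => (r.ht : ℤ) - l.ht

/-- A tree is balanced if every node has imbalance value in {-1, 0, 1}. -/
def Balanced : BTree → Prop
  | leaf => True
  | node l r =>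
      ((r.ht : ℤ) - l.ht = -1 ∨ (r.ht : ℤ) - l.ht = 0 ∨ (r.ht : ℤ) - l.ht = 1) ∧
      Balanced l ∧ Balanced r

/-- The subtree at a position (`false` = go left, `true` = go right). -/
def subtreeAt : BTree → List Bool → Option BTree
  | t, [] => some t
  | leaf, _ :: _ => none
  | node l _, false :: p => subtreeAt l p
  | node _ r, true :: p => subtreeAt r p

/-- `p` is the position of an internal node of `t`. -/
def IsNodePos (t : BTree) (p : List Bool) : Prop :=
  ∃ l r, subtreeAt t p = some (node l r)

/-- Right rotation whose root `y` is at position `p`: the subtree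
`(A ∧ B) ∧ C` at `p` is replaced by `A ∧ (B ∧ C)`. -/
inductive RotAt : BTree → List Bool → BTree → Prop
  | here (a b c : BTree) : RotAt (node (node a b) c) [] (node a (node b c))
  | left {l l' : BTree} (r : BTree) {p : List Bool} :
      RotAt l p l' → RotAt (node l r) (false :: p) (node l' r)
  | right (l : BTree) {r r' : BTree} {p : List Bool} :
      RotAt r p r' → RotAt (node l r) (true :: p) (node l r')

/-- `t₁` is obtained from `t₀` by a single right rotation (`t₀ ⋌ t₁`). -/
def Rot (t₀ t₁ : BTree) : Prop := ∃ p, RotAt t₀ p t₁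

/-- The Tamari order: reflexive transitive closure of right rotation. -/
def Tamari : BTree → BTree → Prop := Relation.ReflTransGen Rot

/-- Key encoding a node position for the infix (left-root-right) order:
going left is `0`, stopping at the node is `1`, going right is `2`. -/
def infixKey (p : List Bool) : List ℕ := p.map (fun b => if b then 2 else 0) ++ [1]

/-- The node at position `p` comes strictly before the node at position `q`
in the infix order (`p ⇝ q`). -/
def InfixBefore (p q : List Bool) : Prop := List.Lex (· < ·) (infixKey p) (infixKey q)

/-- The characteristic word of the node at position `p` in `t`: the heights of
the right subtrees of the node and of its ancestors whose right child is not
itself on the path, ordered from bottom to top. -/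
def charWord : BTree → List Bool → List ℕ
  | node _ r, [] => [r.ht]
  | node l r, false :: p => charWord l p ++ [r.ht]
  | node _ r, true :: p => charWord r p
  | leaf, _ => []
/-- Admissible words on ℕ. -/
def Admissible : List ℕ → Prop
  | [] => True
  | [_] => True
  | a :: b :: t =>
      a - 1 ≤ b ∧ Admissible ((if a - 1 ≤ b ∧ b ≤ a + 1 then max a b + 1 else b) :: t)
termination_by l => l.length

/-- The right subtrees `S_{y_1}, …, S_{y_ℓ}` occurring in the characteristic
sequence of the node at position `p` in `t`, ordered from bottom to top. -/
def rightSubtrees : BTree → List Bool → List BTree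
  | node _ r, [] => [r]
  | node l r, false :: p => rightSubtrees l p ++ [r]
  | node _ r, true :: p => rightSubtrees r p
  | leaf, _ => []

lemma admissible_nil : Admissible [] := by
  rw [Admissible]; trivial

lemma admissible_singleton (a : ℕ) : Admissible [a] := by
  rw [Admissible]; trivial

lemma admissible_cons_cons (a b : ℕ) (t : List ℕ) :
    Admissible (a :: b :: t) ↔
      a - 1 ≤ b ∧ Admissible ((if a - 1 ≤ b ∧ b ≤ a + 1 then max a b + 1 else b) :: t) := by
  rw [Admissible]

lemma admissible_cons_cons_of_le_of_le {a b : ℕ} (t : List ℕ) (hab : a ≤ b + 1)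
    (hba : b ≤ a + 1) : Admissible (a :: b :: t) ↔ Admissible ((max a b + 1) :: t) := by
  rw [admissible_cons_cons, if_pos ⟨by omega, hba⟩]
  exact and_iff_right (by omega)

namespace Admissible

/-- Lowering the first letter keeps a word admissible: it only weakens the constraint
`a - 1 ≤ b` and can only replace the merged letter `max a b + 1` by a smaller one. -/
theorem of_le_head {t : List ℕ} {a a' : ℕ} (h : Admissible (a :: t)) (ha : a' ≤ a) :
    Admissible (a' :: t) := by
  induction t generalizing a a' with
  | nil => exact admissible_singleton a'
  | cons b s ih =>
    rw [admissible_cons_cons] at h ⊢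
    obtain ⟨hab, h⟩ := h
    refine ⟨by omega, ?_⟩
    by_cases hc : a' - 1 ≤ b ∧ b ≤ a' + 1 <;> by_cases hd : a - 1 ≤ b ∧ b ≤ a + 1 <;>
      simp only [hc, hd, and_self, if_true, if_false] at h ⊢
    · exact ih h (by omega)
    · omega
    · exact ih h (by omega)
    · exact h

theorem tail {a : ℕ} {t : List ℕ} (h : Admissible (a :: t)) : Admissible t := by
  cases t with
  | nil => exact admissible_nil
  | cons b s =>
    rw [admissible_cons_cons] at h
    obtain ⟨-, h⟩ := h
    split_ifs at h
    · exact h.of_le_head (by omega)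
    · exact h

theorem of_append {u v : List ℕ} (h : Admissible (u ++ v)) : Admissible v := by
  induction u with
  | nil => exact h
  | cons a u ih => exact ih h.tail

end Admissible

lemma Balanced.ht_le_ht_add_one {l r : BTree} (h : Balanced (node l r)) :
    l.ht ≤ r.ht + 1 ∧ r.ht ≤ l.ht + 1 := by
  obtain ⟨h | h | h, -⟩ := h <;> omega

theorem Balanced.admissible_charWord_append {t : BTree} (hbal : Balanced t) {w : List ℕ}
    (hw : Admissible (t.ht :: w)) (p : List Bool) : Admissible (charWord t p ++ w) := by
  induction t generalizing w p with
  | leaf => cases p <;> exact hw.tail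
  | node l r ihl ihr =>
    obtain ⟨hlr, hrl⟩ := hbal.ht_le_ht_add_one
    have hr : Admissible (r.ht :: w) := hw.of_le_head (by simp only [BTree.ht]; omega)
    rcases p with _ | ⟨_ | _, p⟩
    · exact hr
    · rw [charWord, List.append_assoc]
      refine ihl hbal.2.1 ?_ p
      rw [List.singleton_append, admissible_cons_cons_of_le_of_le w hlr hrl]
      simpa only [BTree.ht, add_comm] using hw
    · exact ihr hbal.2.2 hr p

lemma infixBefore_nil_left {p : List Bool} : InfixBefore [] p ↔ ∃ p', p = true :: p' := by
  rcases p with _ | ⟨_ | _, p⟩ <;>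
    simp [InfixBefore, infixKey, List.cons_lex_cons_iff]

lemma infixBefore_cons_cons {b : Bool} {q p : List Bool} :
    InfixBefore (b :: q) (b :: p) ↔ InfixBefore q p := by
  simp [InfixBefore, infixKey, List.cons_lex_cons_iff]

lemma infixBefore_true_cons_left {q p : List Bool} :
    InfixBefore (true :: q) p ↔ ∃ p', p = true :: p' ∧ InfixBefore q p' := by
  rcases p with _ | ⟨_ | _, p⟩ <;>
    simp [InfixBefore, infixKey, List.cons_lex_cons_iff]

theorem admissible_charWord_append_of_infixBefore (T : BTree) {q p : List Bool} {w : List ℕ}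
    (hadm : Admissible (charWord T q ++ w)) (hbal : ∀ S ∈ rightSubtrees T q, Balanced S)
    (hqp : InfixBefore q p) : Admissible (charWord T p ++ w) := by
  induction T generalizing q p w with
  | leaf => exact hadm
  | node l r ihl ihr =>
    rcases q with _ | ⟨_ | _, q⟩
    · obtain ⟨p, rfl⟩ := infixBefore_nil_left.1 hqp
      exact (hbal r (by simp [rightSubtrees])).admissible_charWord_append hadm p
    · rw [charWord, List.append_assoc, List.singleton_append] at hadm
      rcases p with _ | ⟨_ | _, p⟩
      · exact hadm.of_append
      · rw [charWord, List.append_assoc]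
        exact ihl hadm (fun S hS => hbal S (by simp [rightSubtrees, hS]))
          (infixBefore_cons_cons.1 hqp)
      · exact (hbal r (by simp [rightSubtrees])).admissible_charWord_append hadm.of_append p
    · obtain ⟨p, rfl, hqp'⟩ := infixBefore_true_cons_left.1 hqp
      exact ihr hadm hbal hqp'

theorem charWord_admissible_of_right (T : BTree) (q : List Bool)
    (hadm : Admissible (charWord T q))
    (hbal : ∀ S ∈ rightSubtrees T q, Balanced S) :
    ∀ p : List Bool, IsNodePos T p → InfixBefore q p →
      Admissible (charWord T p) := by
  intro p _ hqp
  simpa using admissible_charWord_append_of_infixBefore T (w := []) (by simpa using hadm) hbal hqp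

end BTree
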